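/- arXiv:2003.03105 — 2 statements merged into one kernel-verified Lean document; each statement's English description precedes it below -/
import Mathlib

section
/- Let A, B be (N+1)×(N+1) Hermitian matrices with A positive semidefinite and B positive definite, and let λ_B be the maximum eigenvalue of B. Then for all v, v₀ ∈ ℂ^{N+1} with all components of unit modulus, (vᴴ A v)/(vᴴ B v) ≥ 2·Re(wᴴ v) + d, where wᴴ = (v₀ᴴ A)/(v₀ᴴ B v₀) − v₀ᴴ(B − λ_B·I)·(v₀ᴴ A v₀)/(v₀ᴴ B v₀)² and d = −[2·λ_B·(N+1) − v₀ᴴ B v₀]·(v₀ᴴ A v₀)/(v₀ᴴ B v₀)². -/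
open Matrix ComplexOrder ComplexConjugate

/-! Writing `x = hᴴv` and `y = vᴴBv`, the quotient is `|x|² / y`, which is jointly convex in
`(x, y)`; its tangent plane at `(x₀, y₀)` gives `|x|² / y ≥ 2 Re(x̄₀ x) / y₀ - |x₀|² y / y₀²`.
The term `-y` is then bounded below by a function affine in `v`: since `λ_B I - B ⪰ 0`,
evaluating this form at `v - v₀` and using `‖v‖² = ‖v₀‖² = N + 1` gives
`y ≤ 2 Re(v₀ᴴ(B - λ_B I)v) + 2 λ_B (N + 1) - v₀ᴴBv₀`. -/

namespace Complex

theorem two_mul_re_conj_mul_div_sub_le_normSq_div (x x₀ : ℂ) {y y₀ : ℝ} (hy : 0 < y)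
    (hy₀ : 0 < y₀) :
    2 * (conj x₀ * x).re / y₀ - normSq x₀ / y₀ ^ 2 * y ≤ normSq x / y := by
  have key : normSq x / y - (2 * (conj x₀ * x).re / y₀ - normSq x₀ / y₀ ^ 2 * y) =
      normSq (x * y₀ - x₀ * y) / (y * y₀ ^ 2) := by
    rw [normSq_sub, normSq_mul, normSq_mul, normSq_ofReal, normSq_ofReal]
    simp only [map_mul, conj_ofReal, mul_re, mul_im, ofReal_re, ofReal_im, conj_re, conj_im]
    field_simp
    ring
  rw [← sub_nonneg, key]
  exact div_nonneg (normSq_nonneg _) (by positivity)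

end Complex

namespace Matrix

variable {n : Type*} [Fintype n]

theorem star_dotProduct_vecMulVec_mulVec {α : Type*} [CommSemiring α] [StarRing α]
    (h a b : n → α) :
    star a ⬝ᵥ vecMulVec h (star h) *ᵥ b = star (star h ⬝ᵥ a) * (star h ⬝ᵥ b) := by
  rw [vecMulVec_mulVec, op_smul_eq_smul, dotProduct_smul, smul_eq_mul, mul_comm, star_dotProduct]

theorem star_dotProduct_self_of_forall_norm_eq_one {u : n → ℂ} (hu : ∀ i, ‖u i‖ = 1) :
    star u ⬝ᵥ u = Fintype.card n := by
  simp [dotProduct, ← Complex.normSq_eq_conj_mul_self, ← Complex.sq_norm, hu]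

theorem PosSemidef.two_mul_re_dotProduct_mulVec_le {M : Matrix n n ℂ} (hM : M.PosSemidef)
    (a b : n → ℂ) :
    2 * (star a ⬝ᵥ M *ᵥ b).re ≤ (star a ⬝ᵥ M *ᵥ a).re + (star b ⬝ᵥ M *ᵥ b).re := by
  have hdiff := (Complex.nonneg_iff.mp (hM.dotProduct_mulVec_nonneg (a - b))).1
  have hconj : star b ⬝ᵥ M *ᵥ a = star (star a ⬝ᵥ M *ᵥ b) := by
    rw [star_dotProduct, star_mulVec, ← dotProduct_mulVec, hM.isHermitian.eq]
  simp only [star_sub, mulVec_sub, sub_dotProduct, dotProduct_sub, hconj, Complex.sub_re,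
    Complex.star_def, Complex.conj_re] at hdiff
  linarith

open scoped MatrixOrder in
theorem IsHermitian.posSemidef_smul_one_sub_of_eigenvalues_le [DecidableEq n]
    {B : Matrix n n ℂ} (hB : B.IsHermitian) {l : ℝ} (hl : ∀ i, hB.eigenvalues i ≤ l) :
    ((l : ℂ) • 1 - B).PosSemidef := by
  have hle : B ≤ algebraMap ℝ _ l := le_algebraMap_of_spectrum_le (by
    rw [hB.spectrum_real_eq_range_eigenvalues]
    rintro _ ⟨i, rfl⟩
    exact hl i) hB
  rw [le_iff, Algebra.algebraMap_eq_smul_one] at hle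
  simpa using hle

theorem IsHermitian.re_dotProduct_mulVec_le_of_eigenvalues_le [DecidableEq n]
    {B : Matrix n n ℂ} (hB : B.IsHermitian) {l : ℝ} (hl : ∀ i, hB.eigenvalues i ≤ l)
    {u u₀ : n → ℂ} (hu : ∀ i, ‖u i‖ = 1) (hu₀ : ∀ i, ‖u₀ i‖ = 1) :
    (star u ⬝ᵥ B *ᵥ u).re ≤ 2 * (star u₀ ⬝ᵥ (B - (l : ℂ) • 1) *ᵥ u).re
      + 2 * l * Fintype.card n - (star u₀ ⬝ᵥ B *ᵥ u₀).re := by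
  have hM := (hB.posSemidef_smul_one_sub_of_eigenvalues_le hl).two_mul_re_dotProduct_mulVec_le
    u₀ u
  have hform (a b : n → ℂ) : star a ⬝ᵥ ((l : ℂ) • 1 - B) *ᵥ b
      = l * (star a ⬝ᵥ b) - star a ⬝ᵥ B *ᵥ b := by
    rw [sub_mulVec, smul_mulVec, one_mulVec, dotProduct_sub, dotProduct_smul, smul_eq_mul]
  rw [← neg_sub ((l : ℂ) • 1) B, neg_mulVec, dotProduct_neg, Complex.neg_re]
  simp only [hform, star_dotProduct_self_of_forall_norm_eq_one hu,
    star_dotProduct_self_of_forall_norm_eq_one hu₀, Complex.sub_re, Complex.re_ofReal_mul,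
    ← Complex.ofReal_natCast, Complex.ofReal_re] at hM ⊢
  linarith

theorem PosDef.re_dotProduct_mulVec_pos {B : Matrix n n ℂ} (hB : B.PosDef) {u : n → ℂ}
    (hu : u ≠ 0) : 0 < (star u ⬝ᵥ B *ᵥ u).re :=
  (Complex.pos_iff.mp (hB.dotProduct_mulVec_pos hu)).1

theorem PosDef.ofReal_re_dotProduct_mulVec {B : Matrix n n ℂ} (hB : B.PosDef) (u : n → ℂ) :
    ((star u ⬝ᵥ B *ᵥ u).re : ℂ) = star u ⬝ᵥ B *ᵥ u :=
  (Complex.eq_re_of_ofReal_le (r := 0)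
    (by exact_mod_cast hB.posSemidef.dotProduct_mulVec_nonneg u)).symm

end Matrix

theorem rayleigh_quotient_linear_lower_bound_general {N : ℕ}
    (h : Fin (N + 1) → ℂ)
    (A B : Matrix (Fin (N + 1)) (Fin (N + 1)) ℂ)
    (hA : A = vecMulVec h (star h))
    (hBpd : B.PosDef)
    (lB : ℝ) (hlB : IsGreatest (Set.range hBpd.isHermitian.eigenvalues) lB)
    (v v₀ : Fin (N + 1) → ℂ)
    (hv : ∀ n, ‖v n‖ = 1) (hv₀ : ∀ n, ‖v₀ n‖ = 1)
    (wH : Fin (N + 1) → ℂ)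
    (hwH : wH = (star v₀ ⬝ᵥ B.mulVec v₀)⁻¹ • (vecMul (star v₀) A)
        - ((star v₀ ⬝ᵥ A.mulVec v₀) / (star v₀ ⬝ᵥ B.mulVec v₀) ^ 2) •
            vecMul (star v₀) (B - (lB : ℂ) • 1))
    (d : ℝ)
    (hd : d = -(2 * lB * (N + 1) - (star v₀ ⬝ᵥ B.mulVec v₀).re) *
        ((star v₀ ⬝ᵥ A.mulVec v₀).re / ((star v₀ ⬝ᵥ B.mulVec v₀).re) ^ 2)) :
    (star v ⬝ᵥ A.mulVec v).re / (star v ⬝ᵥ B.mulVec v).re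
      ≥ 2 * (wH ⬝ᵥ v).re + d := by
  have hne {u : Fin (N + 1) → ℂ} (hu : ∀ n, ‖u n‖ = 1) : u ≠ 0 := fun h0 ↦ by
    simpa [h0] using hu 0
  have hquad := hBpd.isHermitian.re_dotProduct_mulVec_le_of_eigenvalues_le
    (fun i ↦ hlB.2 ⟨i, rfl⟩) hv hv₀
  have hconv := Complex.two_mul_re_conj_mul_div_sub_le_normSq_div (star h ⬝ᵥ v) (star h ⬝ᵥ v₀)
    (hBpd.re_dotProduct_mulVec_pos (hne hv)) (hBpd.re_dotProduct_mulVec_pos (hne hv₀))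
  rw [← hBpd.ofReal_re_dotProduct_mulVec v₀] at hwH
  subst hA hwH hd
  simp only [star_dotProduct_vecMulVec_mulVec, Complex.star_def,
    ← Complex.normSq_eq_conj_mul_self, sub_dotProduct, smul_dotProduct, ← dotProduct_mulVec,
    smul_eq_mul, ← div_eq_inv_mul, ← Complex.ofReal_inv, ← Complex.ofReal_pow,
    ← Complex.ofReal_div, Complex.sub_re, Complex.re_ofReal_mul, Complex.ofReal_re,
    Fintype.card_fin, Nat.cast_add, Nat.cast_one] at hconv hquad ⊢
  have hc : 0 ≤ Complex.normSq (star h ⬝ᵥ v₀) / (star v₀ ⬝ᵥ B *ᵥ v₀).re ^ 2 :=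
    div_nonneg (Complex.normSq_nonneg _) (sq_nonneg _)
  linear_combination hconv + mul_le_mul_of_nonneg_left hquad hc

/-- Lemma 1 of the paper: a linear (surrogate) lower bound on the generalized Rayleigh
quotient `(vᴴ A v)/(vᴴ B v)` for unit-modulus vectors, where `A = h hᴴ` is positive
semidefinite rank one and `B` is Hermitian positive definite with maximum eigenvalue `lB`. -/
theorem rayleigh_quotient_linear_lower_bound {N : ℕ}
    (h : Fin (N + 1) → ℂ)
    (A B : Matrix (Fin (N + 1)) (Fin (N + 1)) ℂ)
    (hA : A = vecMulVec h (star h)) (hApsd : A.PosSemidef)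
    (hBpd : B.PosDef)
    (lB : ℝ) (hlB : IsGreatest (Set.range hBpd.isHermitian.eigenvalues) lB)
    (v v₀ : Fin (N + 1) → ℂ)
    (hv : ∀ n, ‖v n‖ = 1) (hv₀ : ∀ n, ‖v₀ n‖ = 1)
    (wH : Fin (N + 1) → ℂ)
    (hwH : wH = (star v₀ ⬝ᵥ B.mulVec v₀)⁻¹ • (vecMul (star v₀) A)
        - ((star v₀ ⬝ᵥ A.mulVec v₀) / (star v₀ ⬝ᵥ B.mulVec v₀) ^ 2) •
            vecMul (star v₀) (B - (lB : ℂ) • 1))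
    (d : ℝ)
    (hd : d = -(2 * lB * (N + 1) - (star v₀ ⬝ᵥ B.mulVec v₀).re) *
        ((star v₀ ⬝ᵥ A.mulVec v₀).re / ((star v₀ ⬝ᵥ B.mulVec v₀).re) ^ 2)) :
    (star v ⬝ᵥ A.mulVec v).re / (star v ⬝ᵥ B.mulVec v).re
      ≥ 2 * (wH ⬝ᵥ v).re + d :=
  rayleigh_quotient_linear_lower_bound_general h A B hA hBpd lB hlB v v₀ hv hv₀ wH hwH d hd
end

section
/- Let w_ss, w_pp ∈ ℂ^{N+1}, λ ≥ 0, and consider maximizing 2·Re(w_ssᴴ u) over u ∈ ℂ^{N+1} with |u_n| ≤ 1 for all n, subject to 2·Re(w_ppᴴ u) + d_pp ≥ γ_th. If u★ with components u★_n = exp(i·arg(w_ss(n) + λ·w_pp(n))) is feasible and λ·(2·Re(w_ppᴴ u★) + d_pp − γ_th) = 0, then u★ is optimal, and moreover every component of u★ has unit modulus. -/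
open Matrix

/-!
Complementary slackness reduces optimality of `u★` to maximality of the Lagrangian
`2·Re(w_ssᴴ u) + λ·(2·Re(w_ppᴴ u) + d_pp − γ_th)` over the polydisc `|u_n| ≤ 1`. Up to a constant the
Lagrangian is `2·Re(vᴴ u)` with `v = w_ss + λ·w_pp`, and `Re(v̄_n u_n) ≤ |v_n|` with equality when
`u_n` carries the phase of `v_n`.
-/

open Complex ComplexConjugate in
theorem Complex.conj_mul_exp_I_mul_arg (z : ℂ) : conj z * exp (I * arg z) = ‖z‖ := by
  nth_rewrite 1 [← norm_mul_exp_arg_mul_I z]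
  rw [map_mul, conj_ofReal, ← exp_conj, map_mul, conj_ofReal, conj_I, mul_assoc, ← exp_add]
  simp [mul_comm I]

theorem IsMaxOn.le_of_complementary_slackness {α : Type*} {f g : α → ℝ} {s : Set α} {lam : ℝ}
    {x₀ x : α} (hmax : IsMaxOn (fun x => f x + lam * g x) s x₀) (hlam : 0 ≤ lam)
    (hslack : lam * g x₀ = 0) (hx : x ∈ s) (hgx : 0 ≤ g x) : f x ≤ f x₀ := by
  have hLx : f x + lam * g x ≤ f x₀ + lam * g x₀ := hmax hx
  nlinarith [mul_nonneg hlam hgx]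

section PhaseAlignment

open Complex

variable {ι : Type*} [Fintype ι]

theorem re_star_dotProduct_le_sum_norm (v u : ι → ℂ) (hu : ∀ i, ‖u i‖ ≤ 1) :
    (star v ⬝ᵥ u).re ≤ ∑ i, ‖v i‖ := by
  simp only [dotProduct, Pi.star_apply, re_sum]
  refine Finset.sum_le_sum fun i _ => ?_
  calc (star (v i) * u i).re ≤ ‖star (v i) * u i‖ := re_le_norm _
    _ = ‖v i‖ * ‖u i‖ := by rw [norm_mul, norm_star]
    _ ≤ ‖v i‖ := mul_le_of_le_one_right (norm_nonneg _) (hu i)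

theorem star_dotProduct_exp_I_mul_arg (v : ι → ℂ) :
    star v ⬝ᵥ (fun i => exp (I * arg (v i))) = ∑ i, (‖v i‖ : ℂ) :=
  Finset.sum_congr rfl fun i _ => conj_mul_exp_I_mul_arg (v i)

theorem re_star_dotProduct_le_exp_I_mul_arg (v u : ι → ℂ) (hu : ∀ i, ‖u i‖ ≤ 1) :
    (star v ⬝ᵥ u).re ≤ (star v ⬝ᵥ fun i => exp (I * arg (v i))).re := by
  rw [star_dotProduct_exp_I_mul_arg, re_sum]
  simpa using re_star_dotProduct_le_sum_norm v u hu

theorem re_star_add_ofReal_mul_dotProduct (a b u : ι → ℂ) (r : ℝ) :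
    (star (fun i => a i + r * b i) ⬝ᵥ u).re = (star a ⬝ᵥ u).re + r * (star b ⬝ᵥ u).re := by
  have hv : (fun i => a i + r * b i) = a + r • b := by ext i; simp [real_smul]
  rw [hv, star_add, star_smul, add_dotProduct, smul_dotProduct, add_re, smul_re, smul_eq_mul, star_trivial r]

end PhaseAlignment

theorem relaxed_problem_optimal_solution_general {N : ℕ}
    (wss wpp : Fin (N + 1) → ℂ) (lam dpp γth : ℝ) (hlam : 0 ≤ lam)
    (ustar : Fin (N + 1) → ℂ)
    (hustar : ∀ n, ustar n = Complex.exp (Complex.I * ((wss n + (lam : ℂ) * wpp n).arg : ℂ)))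
    (hslack : lam * (2 * (star wpp ⬝ᵥ ustar).re + dpp - γth) = 0) :
    (∀ u : Fin (N + 1) → ℂ, (∀ n, ‖u n‖ ≤ 1) →
        2 * (star wpp ⬝ᵥ u).re + dpp ≥ γth →
        2 * (star wss ⬝ᵥ u).re ≤ 2 * (star wss ⬝ᵥ ustar).re) ∧
      (∀ n, ‖ustar n‖ = 1) := by
  have hphase : ustar = fun n => Complex.exp (Complex.I * (wss n + lam * wpp n).arg) :=
    funext hustar
  refine ⟨fun u hu hfeas => ?_, fun n => hustar n ▸ Complex.norm_exp_I_mul_ofReal _⟩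
  have hmax : IsMaxOn (fun u => 2 * (star wss ⬝ᵥ u).re + lam * (2 * (star wpp ⬝ᵥ u).re + dpp - γth))
      {u | ∀ n, ‖u n‖ ≤ 1} ustar := by
    intro u hu
    have h := re_star_dotProduct_le_exp_I_mul_arg (fun n => wss n + lam * wpp n) u hu
    simp only [← hphase, re_star_add_ofReal_mul_dotProduct] at h
    simp only [Set.mem_ofPred_eq]
    linarith
  exact hmax.le_of_complementary_slackness (g := fun u => 2 * (star wpp ⬝ᵥ u).re + dpp - γth)
    hlam hslack hu (by linarith)

/-- Proposition 1: the phase-aligned point `u★` with `u★_n = exp(i·arg(w_ss(n) + λ·w_pp(n)))`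
is optimal for the relaxed problem (P2.3) when it is feasible and satisfies complementary
slackness, and all its components have unit modulus. -/
theorem relaxed_problem_optimal_solution {N : ℕ}
    (wss wpp : Fin (N + 1) → ℂ) (lam dpp γth : ℝ) (hlam : 0 ≤ lam)
    (hne : ∀ n, wss n + (lam : ℂ) * wpp n ≠ 0)
    (ustar : Fin (N + 1) → ℂ)
    (hustar : ∀ n, ustar n = Complex.exp (Complex.I * ((wss n + (lam : ℂ) * wpp n).arg : ℂ)))
    (hfeas : 2 * (star wpp ⬝ᵥ ustar).re + dpp ≥ γth)
    (hslack : lam * (2 * (star wpp ⬝ᵥ ustar).re + dpp - γth) = 0) :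
    (∀ u : Fin (N + 1) → ℂ, (∀ n, ‖u n‖ ≤ 1) →
        2 * (star wpp ⬝ᵥ u).re + dpp ≥ γth →
        2 * (star wss ⬝ᵥ u).re ≤ 2 * (star wss ⬝ᵥ ustar).re) ∧
      (∀ n, ‖ustar n‖ = 1) :=
  relaxed_problem_optimal_solution_general wss wpp lam dpp γth hlam ustar hustar hslack
end
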